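/- arXiv:1803.04274 — 3 statements merged into one kernel-verified Lean document; each statement's English description precedes it below -/
import Mathlib

section
/- Let q be a prime power and let m = 2n − 1 be an odd positive integer. Then the map sending (g_0, g_1, …, g_{n−1}) ∈ F_{q^m}^n to the map (x,y) ↦ Tr_m(g_0·xy) + Σ_{i=1}^{n−1} Tr_m(g_i·(x·y^{q^i} + x^{q^i}·y)) is a bijection from F_{q^m}^n onto the set of all symmetric F_q-bilinear forms on F_{q^m} viewed as an F_q-vector space; in particular, every symmetric F_q-bilinear form S on F_{q^m} admits unique g_0, …, g_{n−1} ∈ F_{q^m} with S(x,y) = Tr_m(g_0·xy) + Σ_{i=1}^{n−1} Tr_m(g_i·(x·y^{q^i} + x^{q^i}·y)) for all x, y. -/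
/-!
Write `σ` for the Frobenius `x ↦ x ^ q` of `E / F`, so that `σ ^ m = 1` and the trace is
`σ`-invariant; hence `Tr (a * σ^i y) = Tr (σ^(m-i) a * y)` and the form attached to `g` is
`Tr (L x * y)` with `L = ∑_{i<n} g_i σ^i + ∑_{0<i<n} σ^(m-i) ∘ (g_i * ·)`.
As `m = 2n - 1`, the exponents `0, …, n-1` and `m-1, …, m-n+1 ≥ n` are pairwise distinct and
below `m`, so nondegeneracy of the trace and Dedekind's independence of characters show that
only `g = 0` gives the zero form. The source has `q ^ (n m)` elements and the target at most
`q ^ (m (m+1) / 2) = q ^ (n m)`, so the injective map is onto.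
-/

open Finset Module

theorem Set.MapsTo.bijOn_of_injOn_of_ncard_le {α β : Type*} {f : α → β} {s : Set α} {t : Set β}
    (hmaps : MapsTo f s t) (hinj : InjOn f s) (hcard : t.ncard ≤ s.ncard) (ht : t.Finite) :
    BijOn f s t :=
  ⟨hmaps, hinj, (eq_of_subset_of_ncard_le hmaps.image_subset (hinj.ncard_image ▸ hcard) ht).ge⟩

theorem ncard_setOf_symmetric_bilinear_le (K V : Type*) [Field K] [Finite K] [AddCommGroup V]
    [Module K V] [FiniteDimensional K V] :
    {g : V → V → K | ∃ S : V →ₗ[K] V →ₗ[K] K, (∀ x y, S x y = S y x) ∧ ∀ x y, S x y = g x y}.ncard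
      ≤ Nat.card K ^ (finrank K V + 1).choose 2 := by
  set T := {g : V → V → K |
    ∃ S : V →ₗ[K] V →ₗ[K] K, (∀ x y, S x y = S y x) ∧ ∀ x y, S x y = g x y}
  let b := Module.finBasis K V
  let θ : T → Sym2 (Fin (finrank K V)) → K := fun g =>
    Sym2.lift ⟨fun i j => g.1 (b i) (b j), fun i j => by
      obtain ⟨S, hS, hSg⟩ := g.2
      show g.1 (b i) (b j) = g.1 (b j) (b i)
      rw [← hSg, ← hSg, hS]⟩
  have hθ : Function.Injective θ := by
    intro g g' h
    obtain ⟨S, -, hSg⟩ := g.2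
    obtain ⟨S', -, hSg'⟩ := g'.2
    have hSS' : S = S' := b.ext fun i => b.ext fun j => by
      simpa [θ, hSg, hSg'] using congrFun h s(i, j)
    refine Subtype.ext (funext fun x => funext fun y => ?_)
    show g.1 x y = g'.1 x y
    rw [← hSg, ← hSg', hSS']
  calc T.ncard = Nat.card T := (Nat.card_coe_set_eq T).symm
    _ ≤ Nat.card (Sym2 (Fin (finrank K V)) → K) := Nat.card_le_card_of_injective θ hθ
    _ = Nat.card K ^ (finrank K V + 1).choose 2 := by
      rw [Nat.card_fun, Nat.card_eq_fintype_card (α := Sym2 _), Sym2.card, Fintype.card_fin]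

namespace FiniteField

variable (F : Type*) {E : Type*} [Field F] [Fintype F] [Field E] [Finite E] [Algebra F E]

local notation "σ" => frobeniusAlgEquivOfAlgebraic F E

theorem frobeniusAlgEquivOfAlgebraic_pow_apply (i : ℕ) (x : E) :
    (σ ^ i) x = x ^ Fintype.card F ^ i := by
  rw [AlgEquiv.coe_pow, coe_frobeniusAlgEquivOfAlgebraic_iterate]

theorem frobeniusAlgEquivOfAlgebraic_pow_finrank : σ ^ finrank F E = 1 := by
  rw [← orderOf_frobeniusAlgEquivOfAlgebraic]
  exact pow_orderOf_eq_one _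

theorem trace_mul_frobeniusAlgEquivOfAlgebraic_pow {i j : ℕ} (hij : i + j = finrank F E)
    (a y : E) : Algebra.trace F E (a * (σ ^ i) y) = Algebra.trace F E ((σ ^ j) a * y) := by
  rw [← Algebra.trace_eq_of_algEquiv (σ ^ j), map_mul, ← AlgEquiv.mul_apply, ← pow_add,
    add_comm, hij, frobeniusAlgEquivOfAlgebraic_pow_finrank, AlgEquiv.one_apply]

theorem eq_zero_of_sum_mul_frobeniusAlgEquivOfAlgebraic_pow_eq_zero {ι : Type*} [Fintype ι]
    {e : ι → ℕ} (he : Function.Injective e) (he_lt : ∀ j, e j < finrank F E) {c : ι → E}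
    (hc : ∀ x, ∑ j, c j * (σ ^ e j) x = 0) : c = 0 := by
  let φ : ι → E →* E := fun j => (σ ^ e j : E ≃ₐ[F] E).toRingEquiv.toMonoidHom
  have hφ : Function.Injective φ := by
    intro j k hjk
    have : (⟨e j, he_lt j⟩ : Fin (finrank F E)) = ⟨e k, he_lt k⟩ :=
      (bijective_frobeniusAlgEquivOfAlgebraic_pow F E).1
        (AlgEquiv.ext fun x => DFunLike.congr_fun hjk x)
    exact he (Fin.mk.inj_iff.mp this)
  funext j
  exact Fintype.linearIndependent_iff.mp ((linearIndependent_monoidHom E E).comp φ hφ) c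
    (funext fun x => by simpa [φ] using hc x) j

variable {n : ℕ} (hn : 1 ≤ n)

noncomputable def frobeniusForm (g : Fin n → E) : E →ₗ[F] E →ₗ[F] F :=
  LinearMap.mk₂ F (fun x y => Algebra.trace F E (g ⟨0, hn⟩ * (x * y)) +
      ∑ i ∈ univ.filter (fun i : Fin n => (i : ℕ) ≠ 0),
        Algebra.trace F E (g i * (x * (σ ^ (i : ℕ)) y + (σ ^ (i : ℕ)) x * y)))
    (fun x₁ x₂ y => by simp only [map_add, add_mul, mul_add, sum_add_distrib]; ring)
    (fun c x y => by simp only [map_smul, smul_mul_assoc, mul_smul_comm, ← smul_add, ← smul_sum])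
    (fun x y₁ y₂ => by simp only [map_add, mul_add, sum_add_distrib]; ring)
    (fun c x y => by simp only [map_smul, mul_smul_comm, ← smul_add, ← smul_sum])

theorem frobeniusForm_apply (g : Fin n → E) (x y : E) :
    frobeniusForm F hn g x y = Algebra.trace F E (g ⟨0, hn⟩ * (x * y)) +
      ∑ i ∈ univ.filter (fun i : Fin n => (i : ℕ) ≠ 0),
        Algebra.trace F E (g i * (x * y ^ Fintype.card F ^ (i : ℕ) +
          x ^ Fintype.card F ^ (i : ℕ) * y)) := by
  simp only [frobeniusForm, LinearMap.mk₂_apply, frobeniusAlgEquivOfAlgebraic_pow_apply]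

theorem frobeniusForm_comm (g : Fin n → E) (x y : E) :
    frobeniusForm F hn g x y = frobeniusForm F hn g y x := by
  simp only [frobeniusForm, LinearMap.mk₂_apply, mul_comm x y]
  congr 1
  exact sum_congr rfl fun i _ => by ring_nf

theorem frobeniusForm_sub (g g' : Fin n → E) :
    frobeniusForm F hn (g - g') = frobeniusForm F hn g - frobeniusForm F hn g' := by
  ext x y
  simp only [frobeniusForm, LinearMap.mk₂_apply, LinearMap.sub_apply, Pi.sub_apply, sub_mul,
    map_sub, sum_sub_distrib]
  ring

theorem frobeniusForm_apply_eq_trace_mul (hnm : n ≤ finrank F E) (g : Fin n → E) (x y : E) :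
    frobeniusForm F hn g x y = Algebra.trace F E ((∑ i, g i * (σ ^ (i : ℕ)) x +
      ∑ i ∈ univ.filter (fun i : Fin n => (i : ℕ) ≠ 0),
        (σ ^ (finrank F E - i)) (g i * x)) * y) := by
  have hfilter : univ.filter (fun i : Fin n => (i : ℕ) ≠ 0) = univ.erase ⟨0, hn⟩ := by
    ext i
    simp [Fin.ext_iff]
  simp only [frobeniusForm, LinearMap.mk₂_apply, mul_add, map_add, sum_add_distrib, add_mul,
    sum_mul, map_sum]
  rw [← add_sum_erase _ (fun i => Algebra.trace F E (g i * (σ ^ (i : ℕ)) x * y))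
    (mem_univ ⟨0, hn⟩), ← hfilter]
  have hswap (i : Fin n) : Algebra.trace F E (g i * (x * (σ ^ (i : ℕ)) y)) =
      Algebra.trace F E ((σ ^ (finrank F E - i)) (g i * x) * y) := by
    rw [← mul_assoc, trace_mul_frobeniusAlgEquivOfAlgebraic_pow F (j := finrank F E - i) (by omega)]
  simp only [hswap, pow_zero, AlgEquiv.one_apply, mul_assoc]
  abel

theorem eq_zero_of_frobeniusForm_eq_zero (hm : 2 * n - 1 ≤ finrank F E) {g : Fin n → E}
    (hg : frobeniusForm F hn g = 0) : g = 0 := by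
  set m := finrank F E
  have hL (x : E) : ∑ i, g i * (σ ^ (i : ℕ)) x +
      ∑ i ∈ univ.filter (fun i : Fin n => (i : ℕ) ≠ 0), (σ ^ (m - i)) (g i * x) = 0 :=
    (traceForm_nondegenerate F E).1 _ fun y => by
      rw [Algebra.traceForm_apply, ← frobeniusForm_apply_eq_trace_mul F hn (by omega), hg]
      rfl
  let e : Fin n ⊕ {i : Fin n // (i : ℕ) ≠ 0} → ℕ := Sum.elim (fun i => i) (fun i => m - i)
  have he : Function.Injective e := by
    rintro (i | ⟨i, hi⟩) (j | ⟨j, hj⟩) hij <;>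
      simp only [e, Sum.elim_inl, Sum.elim_inr, Sum.inl.injEq, Sum.inr.injEq, Subtype.mk.injEq,
        reduceCtorEq, Fin.ext_iff] at hij ⊢ <;> omega
  have he_lt (j) : e j < m := by
    rcases j with i | ⟨i, hi⟩ <;> simp only [e, Sum.elim_inl, Sum.elim_inr] <;> omega
  have hc := eq_zero_of_sum_mul_frobeniusAlgEquivOfAlgebraic_pow_eq_zero F he he_lt
    (c := Sum.elim g fun i => (σ ^ (m - i)) (g i)) fun x => by
      rw [Fintype.sum_sum_type, ← hL x, sum_subtype (p := fun i : Fin n => (i : ℕ) ≠ 0)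
        (F := inferInstance) _ (fun i => by simp) (fun i : Fin n => (σ ^ (m - i)) (g i * x))]
      simp only [e, Sum.elim_inl, Sum.elim_inr, map_mul]
  funext i
  exact congrFun hc (Sum.inl i)

theorem frobeniusForm_injective (hm : 2 * n - 1 ≤ finrank F E) :
    Function.Injective (frobeniusForm (E := E) F hn) := by
  intro g g' h
  refine sub_eq_zero.mp (eq_zero_of_frobeniusForm_eq_zero F hn hm ?_)
  rw [frobeniusForm_sub, h]
  exact sub_self (frobeniusForm F hn g')

end FiniteField

open FiniteField in
/-- **Theorem (canonical representation of symmetric bilinear forms, odd extension degree).**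
For `m = 2n - 1` odd, the map
`(g_0, …, g_{n-1}) ↦ ((x, y) ↦ Tr_m (g_0 x y) + ∑_{i=1}^{n-1} Tr_m (g_i (x y^{q^i} + x^{q^i} y)))`
is a bijection from `F_{q^m}^n` onto the set of all symmetric `F_q`-bilinear forms on
`F_{q^m}` viewed as an `F_q`-vector space. -/
theorem canonical_representation_of_symmetric_bilinear_forms_odd_degree
    (F E : Type) [Field F] [Fintype F] [Field E] [Fintype E] [Algebra F E]
    (q : ℕ) (hq : q = Fintype.card F)
    (n m : ℕ) (hn : 1 ≤ n) (hm : m = 2 * n - 1)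
    (hdim : Module.finrank F E = m) :
    Set.BijOn
      (fun g : Fin n → E => fun x y : E =>
        Algebra.trace F E (g ⟨0, hn⟩ * (x * y)) +
          ∑ i ∈ Finset.univ.filter (fun i : Fin n => (i : ℕ) ≠ 0),
            Algebra.trace F E (g i * (x * y ^ q ^ (i : ℕ) + x ^ q ^ (i : ℕ) * y)))
      Set.univ
      {g : E → E → F | ∃ S : E →ₗ[F] E →ₗ[F] F,
        (∀ x y, S x y = S y x) ∧ ∀ x y, S x y = g x y} := by
  subst hq
  simp only [← frobeniusForm_apply F hn]
  have hinj : Set.InjOn (fun g x y => frobeniusForm F hn g x y) Set.univ := fun g _ g' _ h =>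
    frobeniusForm_injective (E := E) F hn (by omega)
      (LinearMap.ext₂ fun x y => congrFun (congrFun h x) y)
  have hchoose : (m + 1).choose 2 = m * n := by
    rw [Nat.choose_two_right, Nat.add_sub_cancel, show m + 1 = 2 * n by omega, mul_comm,
      mul_left_comm, Nat.mul_div_cancel_left _ two_pos]
  refine Set.MapsTo.bijOn_of_injOn_of_ncard_le
    (fun g _ => ⟨_, frobeniusForm_comm F hn g, fun _ _ => rfl⟩) hinj ?_ (Set.toFinite _)
  calc _ ≤ Nat.card F ^ (finrank F E + 1).choose 2 := ncard_setOf_symmetric_bilinear_le F E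
    _ = (Nat.card F ^ finrank F E) ^ n := by rw [hdim, hchoose, pow_mul]
    _ = Nat.card (Fin n → E) := by
      rw [Nat.card_fun, Nat.card_fin, Module.natCard_eq_pow_finrank (K := F) (V := E)]
    _ = _ := (Set.ncard_univ _).symm
end

section
/- Let q be a prime power and let m = 2n be an even positive integer. Then the map sending (f_0, f_1, …, f_{n−1}, f_n) ∈ F_{q^m}^n × F_{q^n} to the function x ↦ Σ_{i=0}^{n−1} Tr_m(f_i·x^{q^i + 1}) + Tr_n(f_n·x^{q^n + 1}) is a bijection from F_{q^m}^n × F_{q^n} onto the set of all quadratic forms on F_{q^m} viewed as an F_q-vector space (note that x^{q^n+1} ∈ F_{q^n} for all x ∈ F_{q^m}); in particular, every quadratic form on F_{q^m} admits a unique such representation. -/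
/-!
Each summand is a quadratic form: `x ↦ x * x ^ (q ^ i)` is a product of two `F`-linear maps, and
the `Tr_n`-term becomes a `Tr_m`-term because `Tr_{E/K}` is onto. The representation is
`F`-linear, and it is injective: by `Tr(y) = ∑ⱼ y ^ (q ^ j)` a representation of zero is a
vanishing combination of the monomials `x ^ ((q ^ i + 1) q ^ j)`, in which modulo `q ^ m - 1`
only `(i, 0)` contributes to the exponent `q ^ i + 1`; orthogonality of the characters
`x ↦ x ^ k` of `Eˣ` then kills the coefficient `f_i` (resp. `f_n`). Finally both sides have
`q ^ (n (2n + 1))` elements, since a quadratic form is determined by its `m` values and its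
`m (m - 1) / 2` polar values on a basis.
-/

namespace Nat

theorem eq_zero_and_eq_of_pow_add_pow_eq_pow_add_one {q a b c : ℕ} (hq : 2 ≤ q) (hba : b ≤ a)
    (h : q ^ a + q ^ b = q ^ c + 1) : b = 0 ∧ a = c := by
  rcases Nat.eq_zero_or_pos b with rfl | hb
  · exact ⟨rfl, Nat.pow_right_injective hq (by simpa using h)⟩
  · have hqa : q ∣ q ^ a := dvd_pow_self q (by omega)
    have hqb : q ∣ q ^ b := dvd_pow_self q (by omega)
    rcases Nat.eq_zero_or_pos c with rfl | hc
    · have : q ≤ q ^ b := Nat.le_self_pow hb.ne' q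
      have : q ^ b ≤ q ^ a := Nat.pow_le_pow_right (by omega) hba
      rw [pow_zero] at h
      omega
    · have : q ∣ 1 := (Nat.dvd_add_right (dvd_pow_self q hc.ne')).mp (h ▸ dvd_add hqa hqb)
      have := Nat.le_of_dvd one_pos this
      omega

theorem pow_add_pow_le_pow {q a b m : ℕ} (hq : 2 ≤ q) (ha : a < m) (hb : b < m) :
    q ^ a + q ^ b ≤ q ^ m := by
  have h1 : q ^ a ≤ q ^ (m - 1) := Nat.pow_le_pow_right (by omega) (by omega)
  have h2 : q ^ b ≤ q ^ (m - 1) := Nat.pow_le_pow_right (by omega) (by omega)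
  have h3 : q ^ m = q ^ (m - 1) * q := by rw [← pow_succ]; congr 1; omega
  have h4 : q ^ (m - 1) * 2 ≤ q ^ (m - 1) * q := Nat.mul_le_mul_left _ hq
  omega

theorem eq_and_eq_zero_of_pow_add_one_mul_pow_modEq {q n i i' j : ℕ} (hq : 2 ≤ q) (hi : i ≤ n)
    (hi' : i' ≤ n) (hj : j < 2 * n) (hnj : i' = n → j < n)
    (h : (q ^ i' + 1) * q ^ j ≡ q ^ i + 1 [MOD q ^ (2 * n) - 1]) : i' = i ∧ j = 0 := by
  have hpos : ∀ t, 1 ≤ q ^ t := fun t => Nat.one_le_pow _ _ (by omega)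
  -- Both sides become sums of two powers of `q` in `[2, q ^ (2 * n)]`, a window shorter than the
  -- modulus, and then base-`q` digits can be compared.
  have reduce : ∀ a b, a < 2 * n → b < 2 * n → q ^ a + q ^ b ≡ q ^ i + 1 [MOD q ^ (2 * n) - 1] →
      q ^ a + q ^ b = q ^ i + 1 := by
    intro a b ha hb hab
    have h1 := pow_add_pow_le_pow hq ha hb
    have h2 := pow_add_pow_le_pow hq (show i < 2 * n by omega) (show 0 < 2 * n by omega)
    rw [pow_zero] at h2
    refine hab.eq_of_abs_lt ?_
    have := hpos a; have := hpos b; have := hpos i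
    rw [abs_lt]; constructor <;> omega
  rcases Nat.lt_or_ge (i' + j) (2 * n) with hwrap | hwrap
  · have h' : q ^ (i' + j) + q ^ j ≡ q ^ i + 1 [MOD q ^ (2 * n) - 1] := by
      rwa [add_mul, one_mul, ← pow_add] at h
    obtain ⟨hj0, hi'⟩ := eq_zero_and_eq_of_pow_add_pow_eq_pow_add_one hq (by omega)
      (reduce _ _ hwrap hj h')
    omega
  · have h' : q ^ j + q ^ (i' + j - 2 * n) ≡ q ^ i + 1 [MOD q ^ (2 * n) - 1] := by
      refine Nat.ModEq.trans ?_ h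
      have hsplit : (q ^ i' + 1) * q ^ j = q ^ j + q ^ (2 * n) * q ^ (i' + j - 2 * n) := by
        rw [add_mul, one_mul, ← pow_add, ← pow_add, Nat.add_sub_cancel' hwrap, add_comm]
      rw [hsplit]
      exact .add_left _ (by simpa using ((Nat.modEq_sub (hpos _)).mul_right _).symm)
    obtain ⟨hr, hji⟩ := eq_zero_and_eq_of_pow_add_pow_eq_pow_add_one hq (by omega)
      (reduce _ _ hj (by omega) h')
    omega

theorem dvd_add_sub_one_mul_iff_modEq {N e t : ℕ} (hN : 1 ≤ N) :
    N ∣ e + (N - 1) * t ↔ e ≡ t [MOD N] := by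
  have hNt : t + (N - 1) * t ≡ 0 [MOD N] := by
    refine Nat.modEq_zero_iff_dvd.2 ⟨t, ?_⟩
    obtain ⟨M, rfl⟩ : ∃ M, N = M + 1 := ⟨N - 1, by omega⟩
    simp only [Nat.add_sub_cancel]
    ring
  rw [← Nat.modEq_zero_iff_dvd, ← Nat.ModEq.rfl.add_iff_right (a := e) (b := t) (c := (N - 1) * t)]
  exact ⟨fun h => h.trans hNt.symm, fun h => h.trans hNt⟩

theorem two_mul_add_choose_two (n : ℕ) : 2 * n + (2 * n).choose 2 = 2 * n * n + n := by
  rw [Nat.choose_two_right, mul_assoc, Nat.mul_div_cancel_left _ two_pos]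
  cases n with
  | zero => rfl
  | succ k => rw [show 2 * (k + 1) - 1 = 2 * k + 1 by omega]; ring

end Nat

namespace QuadraticMap

variable {R M N ι : Type*} [CommRing R] [AddCommGroup M] [Module R M] [AddCommGroup N]
  [Module R N]

theorem ext_basis [Fintype ι] (b : Module.Basis ι R M) {Q₁ Q₂ : QuadraticMap R M N}
    (h₁ : ∀ i, Q₁ (b i) = Q₂ (b i))
    (h₂ : ∀ i j, i ≠ j → polar Q₁ (b i) (b j) = polar Q₂ (b i) (b j)) : Q₁ = Q₂ := by
  classical
  ext x
  rw [← b.sum_repr x, QuadraticMap.map_sum, QuadraticMap.map_sum]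
  congr 1
  · simp only [QuadraticMap.map_smul, h₁]
  · refine Finset.sum_congr rfl fun z hz => ?_
    induction z using Sym2.inductionOn with
    | hf i j =>
      have hij : i ≠ j := by simpa using (Finset.mem_filter.1 hz).2
      simp only [Sym2.map_mk, polarSym2_sym2Mk, polar_smul_left, polar_smul_right, h₂ i j hij]

theorem injective_basis_polarSym2 [Fintype ι] (b : Module.Basis ι R M) :
    Function.Injective fun Q : QuadraticMap R M N =>
      (fun i => Q (b i), fun z : {z : Sym2 ι // ¬z.IsDiag} => polarSym2 Q (z.1.map b)) := by
  intro Q₁ Q₂ h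
  simp only [Prod.mk.injEq, funext_iff] at h
  refine ext_basis b h.1 fun i j hij => ?_
  simpa using h.2 ⟨s(i, j), by simpa using hij⟩

variable [Module.Free R M] [Module.Finite R M] [Finite N]

instance : Finite (QuadraticMap R M N) :=
  Finite.of_injective _ (injective_basis_polarSym2 (N := N) (Module.Free.chooseBasis R M))

theorem natCard_le [Nontrivial R] :
    Nat.card (QuadraticMap R M N) ≤
      Nat.card N ^ (Module.finrank R M + (Module.finrank R M).choose 2) := by
  refine (Nat.card_le_card_of_injective _
    (injective_basis_polarSym2 (N := N) (Module.finBasis R M))).trans_eq ?_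
  rw [Nat.card_prod, Nat.card_fun, Nat.card_fun, Sym2.natCard_subtype_not_diag, Nat.card_fin,
    ← pow_add]

end QuadraticMap

namespace FiniteField

theorem eq_zero_of_forall_sum_mul_pow_eq_zero {K ι : Type*} [Field K] [Fintype K] {s : Finset ι}
    {e : ι → ℕ} {a : ι → K} (h : ∀ x : K, x ≠ 0 → ∑ k ∈ s, a k * x ^ e k = 0) {k₀ : ι}
    (hk₀ : k₀ ∈ s) (huniq : ∀ k ∈ s, e k ≡ e k₀ [MOD Fintype.card K - 1] → k = k₀) :
    a k₀ = 0 := by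
  classical
  set N := Fintype.card K - 1
  have hN : 1 ≤ N := by have := Fintype.one_lt_card (α := K); omega
  -- Multiplying by `x ^ ((N - 1) * e k₀)` and summing over `x ∈ Kˣ` isolates the `k₀`-term.
  have hchar : ∀ k ∈ s,
      ∑ x : Kˣ, ((x : K) ^ (e k + (N - 1) * e k₀)) = if k = k₀ then -1 else 0 := by
    intro k hk
    rw [sum_pow_units]
    by_cases hk' : k = k₀
    · rw [if_pos ((Nat.dvd_add_sub_one_mul_iff_modEq hN).2 (hk' ▸ rfl)), if_pos hk']
    · rw [if_neg fun hd => hk' (huniq k hk ((Nat.dvd_add_sub_one_mul_iff_modEq hN).1 hd)),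
        if_neg hk']
  calc a k₀ = -∑ k ∈ s, a k * ∑ x : Kˣ, ((x : K) ^ (e k + (N - 1) * e k₀)) := by
        rw [Finset.sum_congr rfl fun k hk => by rw [hchar k hk]]
        simp [hk₀]
    _ = -∑ x : Kˣ, (x : K) ^ ((N - 1) * e k₀) * ∑ k ∈ s, a k * (x : K) ^ e k := by
        simp only [Finset.mul_sum, pow_add]
        rw [Finset.sum_comm]
        congr 1
        exact Finset.sum_congr rfl fun x _ => Finset.sum_congr rfl fun k _ => by ring
    _ = 0 := by simp [h _ (Units.ne_zero _)]

variable (F : Type*) {E : Type*} [Field F] [Fintype F] [CommRing E] [Algebra F E]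

noncomputable def traceFrobeniusForm (f : E) (i : ℕ) : QuadraticForm F E :=
  ((Algebra.trace F E).comp (LinearMap.mulLeft F f)).compQuadraticMap
    (QuadraticMap.linMulLin LinearMap.id ((frobeniusAlgHom F E).toLinearMap ^ i))

theorem traceFrobeniusForm_apply (f : E) (i : ℕ) (x : E) :
    traceFrobeniusForm F f i x = Algebra.trace F E (f * x ^ (Fintype.card F ^ i + 1)) := by
  simp [traceFrobeniusForm, Module.End.pow_apply, coe_frobeniusAlgHom, pow_iterate, pow_succ']

end FiniteField

theorem Algebra.exists_trace_mul_eq_trace_mul (F K E : Type*) [Field F] [Field K] [Field E]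
    [Finite E] [Algebra F K] [Algebra K E] [Algebra F E] [IsScalarTower F K E] (c : K) :
    ∃ e : E, ∀ y : K, Algebra.trace F K (c * y) = Algebra.trace F E (e * algebraMap K E y) := by
  have : Finite K := Finite.of_injective _ (algebraMap K E).injective
  have : Finite F := Finite.of_injective _ (algebraMap F K).injective
  obtain ⟨e, rfl⟩ := Algebra.trace_surjective K E c
  refine ⟨e, fun y => ?_⟩
  rw [← Algebra.trace_trace (S := K) (e * _), mul_comm e, ← Algebra.smul_def, LinearMap.map_smul,
    smul_eq_mul, mul_comm]

section TraceRepr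

variable {F E : Type*} [Field F] [Fintype F] [Field E] [Algebra F E]

noncomputable def traceRepr (n : ℕ) (K : Subalgebra F E)
    (hK : ∀ x : E, x ^ (Fintype.card F ^ n + 1) ∈ K) (fc : (Fin n → E) × K) (x : E) : F :=
  (∑ i : Fin n, Algebra.trace F E (fc.1 i * x ^ (Fintype.card F ^ (i : ℕ) + 1))) +
    Algebra.trace F K (fc.2 * ⟨x ^ (Fintype.card F ^ n + 1), hK x⟩)

variable {n : ℕ} {K : Subalgebra F E} (hK : ∀ x : E, x ^ (Fintype.card F ^ n + 1) ∈ K)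

theorem traceRepr_sub (a b : (Fin n → E) × K) :
    traceRepr n K hK (a - b) = traceRepr n K hK a - traceRepr n K hK b := by
  funext x
  simp only [traceRepr, Prod.fst_sub, Prod.snd_sub, Pi.sub_apply, sub_mul, map_sub,
    Finset.sum_sub_distrib]
  ring

theorem exists_quadraticForm_coe_eq_traceRepr [Finite E] (fc : (Fin n → E) × K) :
    ∃ Q : QuadraticForm F E, ⇑Q = traceRepr n K hK fc := by
  let : Field K := (Finite.isField_of_domain K).toField
  obtain ⟨e, he⟩ := Algebra.exists_trace_mul_eq_trace_mul F K E fc.2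
  refine ⟨∑ i, FiniteField.traceFrobeniusForm F (fc.1 i) i +
    FiniteField.traceFrobeniusForm F e n, ?_⟩
  funext x
  simp [traceRepr, FiniteField.traceFrobeniusForm_apply, he]

theorem algebraMap_traceRepr [Finite E] {m : ℕ} (hdim : Module.finrank F E = m)
    (hKdim : Module.finrank F K = n) (fc : (Fin n → E) × K) (x : E) :
    algebraMap F E (traceRepr n K hK fc x) =
      (∑ i : Fin n, ∑ j : Fin m, fc.1 i ^ Fintype.card F ^ (j : ℕ) *
        x ^ ((Fintype.card F ^ (i : ℕ) + 1) * Fintype.card F ^ (j : ℕ))) +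
      ∑ j : Fin n, (fc.2 : E) ^ Fintype.card F ^ (j : ℕ) *
        x ^ ((Fintype.card F ^ n + 1) * Fintype.card F ^ (j : ℕ)) := by
  let : Field K := (Finite.isField_of_domain K).toField
  have : Finite K := Finite.of_injective _ (algebraMap K E).injective
  have htrE : ∀ y : E,
      algebraMap F E (Algebra.trace F E y) = ∑ j : Fin m, y ^ Fintype.card F ^ (j : ℕ) := by
    intro y
    rw [FiniteField.algebraMap_trace_eq_sum_pow, hdim, Finset.sum_range, Nat.card_eq_fintype_card]
  have htrK : ∀ z : K,
      algebraMap F E (Algebra.trace F K z) = ∑ j : Fin n, (z : E) ^ Fintype.card F ^ (j : ℕ) := by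
    intro z
    rw [IsScalarTower.algebraMap_apply F K E, FiniteField.algebraMap_trace_eq_sum_pow, hKdim,
      Finset.sum_range, Nat.card_eq_fintype_card, map_sum]
    rfl
  simp only [traceRepr, map_add, map_sum, htrE, htrK, MulMemClass.coe_mul, mul_pow, ← pow_mul]

theorem eq_zero_of_traceRepr_eq_zero [Fintype E] (hdim : Module.finrank F E = 2 * n)
    (hKdim : Module.finrank F K = n) {fc : (Fin n → E) × K} (h : traceRepr n K hK fc = 0) :
    fc = 0 := by
  set q := Fintype.card F
  have hq : 2 ≤ q := Fintype.one_lt_card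
  have hn : 0 < n := by
    have := Module.finrank_pos (R := F) (M := E)
    omega
  let e : (Fin n × Fin (2 * n)) ⊕ Fin n → ℕ :=
    Sum.elim (fun ij => (q ^ (ij.1 : ℕ) + 1) * q ^ (ij.2 : ℕ)) (fun j => (q ^ n + 1) * q ^ (j : ℕ))
  let a : (Fin n × Fin (2 * n)) ⊕ Fin n → E :=
    Sum.elim (fun ij => fc.1 ij.1 ^ q ^ (ij.2 : ℕ)) (fun j => (fc.2 : E) ^ q ^ (j : ℕ))
  have hsum : ∀ x : E, x ≠ 0 → ∑ k, a k * x ^ e k = 0 := by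
    intro x _
    simpa [Fintype.sum_sum_type, Fintype.sum_prod_type, h, a, e] using
      (algebraMap_traceRepr hK hdim hKdim fc x).symm
  have hcardE : Fintype.card E - 1 = q ^ (2 * n) - 1 := by
    rw [Module.card_eq_pow_finrank (K := F), hdim]
  have hcoeff := fun k₀ => FiniteField.eq_zero_of_forall_sum_mul_pow_eq_zero hsum
    (Finset.mem_univ k₀)
  simp only [Finset.mem_univ, true_implies, hcardE] at hcoeff
  have key {i i' j : ℕ} (hi : i ≤ n) (hi' : i' ≤ n) (hj : j < 2 * n) (hnj : i' = n → j < n)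
      (h : (q ^ i' + 1) * q ^ j ≡ (q ^ i + 1) * q ^ 0 [MOD q ^ (2 * n) - 1]) : i' = i ∧ j = 0 := by
    rw [pow_zero, mul_one] at h
    exact Nat.eq_and_eq_zero_of_pow_add_one_mul_pow_modEq hq hi hi' hj hnj h
  ext i
  · refine (by simpa [a] using ·) <| hcoeff (.inl (i, ⟨0, by omega⟩)) ?_
    rintro (⟨i', j'⟩ | j') hk
    · obtain ⟨hi, hj⟩ := key i.2.le i'.2.le j'.2 (fun h => absurd h i'.2.ne) hk
      simp [Fin.ext_iff, hi, hj]
    · have := key i.2.le le_rfl (by omega) (fun _ => j'.2) hk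
      omega
  · refine (by simpa [a] using ·) <| hcoeff (.inr ⟨0, hn⟩) ?_
    rintro (⟨i', j'⟩ | j') hk
    · have := key le_rfl i'.2.le j'.2 (fun h => absurd h i'.2.ne) hk
      omega
    · have := key le_rfl le_rfl (by omega) (fun _ => j'.2) hk
      simp [Fin.ext_iff, this.2]

end TraceRepr

theorem canonical_representation_of_quadratic_forms_even_degree_general
    (F E : Type) [Field F] [Fintype F] [Field E] [Fintype E] [Algebra F E]
    (q : ℕ) (hq : q = Fintype.card F)
    (n m : ℕ) (hm : m = 2 * n)
    (hdim : Module.finrank F E = m)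
    (K : Subalgebra F E) (hKdim : Module.finrank F K = n)
    (hKmem : ∀ x : E, x ^ (q ^ n + 1) ∈ K) :
    Set.BijOn
      (fun fc : (Fin n → E) × K => fun x : E =>
        (∑ i : Fin n, Algebra.trace F E (fc.1 i * x ^ (q ^ (i : ℕ) + 1))) +
          Algebra.trace F K (fc.2 * ⟨x ^ (q ^ n + 1), hKmem x⟩))
      Set.univ
      {g : E → F | ∃ Q : QuadraticForm F E, ⇑Q = g} := by
  subst hq hm
  have hinj : Function.Injective (traceRepr n K hKmem) := fun a b hab => sub_eq_zero.1 <|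
    eq_zero_of_traceRepr_eq_zero hKmem hdim hKdim (by rw [traceRepr_sub, hab, sub_self])
  have hmaps : Set.MapsTo (traceRepr n K hKmem) Set.univ {g | ∃ Q : QuadraticForm F E, ⇑Q = g} :=
    fun fc _ => exists_quadraticForm_coe_eq_traceRepr hKmem fc
  have hcard : {g : E → F | ∃ Q : QuadraticForm F E, ⇑Q = g}.ncard ≤
      (Set.univ : Set ((Fin n → E) × K)).ncard :=
    calc _ = Nat.card (Set.range ((⇑) : QuadraticForm F E → E → F)) :=
          (Nat.card_coe_set_eq _).symm
      _ ≤ Nat.card (QuadraticForm F E) := Finite.card_range_le _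
      _ ≤ Nat.card F ^ (2 * n + (2 * n).choose 2) := hdim ▸ QuadraticMap.natCard_le
      _ = (Set.univ : Set ((Fin n → E) × K)).ncard := by
        rw [Set.ncard_univ, Nat.card_prod, Nat.card_fun,
          Module.natCard_eq_pow_finrank (K := F) (V := E),
          Module.natCard_eq_pow_finrank (K := F) (V := K), hdim, hKdim, Nat.card_fin, ← pow_mul,
          ← pow_add, Nat.two_mul_add_choose_two]
  refine ⟨hmaps, hinj.injOn, fun g hg => ?_⟩
  obtain ⟨fc, -, rfl⟩ := Set.surj_on_of_inj_on_of_ncard_le (fun fc _ => traceRepr n K hKmem fc)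
    (fun _ _ => hmaps trivial) (fun _ _ _ _ h => hinj h) hcard (Set.toFinite _) g hg
  exact ⟨fc, trivial, rfl⟩

/-- **Theorem (canonical representation of quadratic forms, even extension degree).**
For `m = 2n`, with `K` the subfield `F_{q^n}` of `E = F_{q^m}` (note that `x^{q^n+1} ∈ K`
for all `x ∈ E`, which is recorded by the hypothesis `hKmem`), the map
`(f_0, …, f_{n-1}, f_n) ↦ (x ↦ ∑_{i<n} Tr_m (f_i x^{q^i+1}) + Tr_n (f_n x^{q^n+1}))`
is a bijection from `F_{q^m}^n × F_{q^n}` onto the set of all quadratic forms on `E`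
viewed as an `F_q`-vector space. -/
theorem canonical_representation_of_quadratic_forms_even_degree
    (F E : Type) [Field F] [Fintype F] [Field E] [Fintype E] [Algebra F E]
    (q : ℕ) (hq : q = Fintype.card F)
    (n m : ℕ) (hn : 1 ≤ n) (hm : m = 2 * n)
    (hdim : Module.finrank F E = m)
    (K : Subalgebra F E) (hKdim : Module.finrank F K = n)
    (hKmem : ∀ x : E, x ^ (q ^ n + 1) ∈ K) :
    Set.BijOn
      (fun fc : (Fin n → E) × K => fun x : E =>
        (∑ i : Fin n, Algebra.trace F E (fc.1 i * x ^ (q ^ (i : ℕ) + 1))) +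
          Algebra.trace F K (fc.2 * ⟨x ^ (q ^ n + 1), hKmem x⟩))
      Set.univ
      {g : E → F | ∃ Q : QuadraticForm F E, ⇑Q = g} :=
  canonical_representation_of_quadratic_forms_even_degree_general F E q hq n m hm hdim K hKdim hKmem
end

section
/- Let q be a prime power, m ≥ 1 an integer, and let L = Σ_{k=0}^{m−1} c_k X^{q^k} be a linearised polynomial with coefficients c_k ∈ F_{q^m}. Let ξ_1, …, ξ_m be an F_q-basis of F_{q^m}, let M ∈ F_q^{m×m} be the matrix with entries M_{ij} = Tr_m(ξ_i·L(ξ_j)) for 1 ≤ i, j ≤ m, let P ∈ F_{q^m}^{m×m} have entries P_{ij} = ξ_i^{q^j}, and let D_L ∈ F_{q^m}^{m×m} be the Dickson matrix of L, with entries (D_L)_{ij} = c_{(j−i) mod m}^{q^i}. Then, regarding M as a matrix over F_{q^m} via the inclusion F_q ⊆ F_{q^m}, one has M = P·D_L·Pᵀ. -/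
/-!
Both sides are computed entrywise through the Frobenius `x ↦ x ^ q`. The trace is the sum of
the `m` Frobenius conjugates `y ^ q ^ (k + 1)`, and, since `x ^ q ^ m = x`, the conjugate
`L(x) ^ q ^ (k + 1)` is the `k`-th row of the Dickson matrix applied to the conjugates of `x`:
`∑ l, c (l - k) ^ q ^ (k + 1) * x ^ q ^ (l + 1)`. Expanding `ξ i * L (ξ j)` this way gives
`∑ k l, P i k * D k l * P j l`.
-/

namespace FiniteField

open Module

variable {F E : Type*} [Field F] [Fintype F] [Field E] [Algebra F E]

theorem frobeniusAlgHom_pow_apply (n : ℕ) (x : E) :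
    (frobeniusAlgHom F E ^ n) x = x ^ Fintype.card F ^ n := by
  rw [AlgHom.coe_pow, coe_frobeniusAlgHom, pow_iterate]

variable [Fintype E]

theorem pow_card_pow_mod_finrank (x : E) (a : ℕ) :
    x ^ Fintype.card F ^ (a % finrank F E) = x ^ Fintype.card F ^ a := by
  conv_rhs => rw [← Nat.mod_add_div a (finrank F E), pow_add, pow_mul, pow_mul,
    ← card_eq_pow_finrank, pow_card_pow]

theorem algebraMap_trace_eq_sum_pow_succ (y : E) :
    algebraMap F E (Algebra.trace F E y) =
      ∑ k : Fin (finrank F E), y ^ Fintype.card F ^ ((k : ℕ) + 1) := by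
  set f : ℕ → E := fun k => y ^ Fintype.card F ^ k
  have hperiod : f (finrank F E) = f 0 := by
    simp only [f, ← card_eq_pow_finrank, pow_card, pow_zero, pow_one]
  rw [algebraMap_trace_eq_sum_pow, Nat.card_eq_fintype_card,
    Fin.sum_univ_eq_sum_range (fun k => f (k + 1))]
  have := Finset.sum_range_succ f (finrank F E)
  rw [Finset.sum_range_succ', hperiod] at this
  exact (add_right_cancel this).symm

theorem sum_mul_pow_card_pow_pow_succ (c : Fin (finrank F E) → E) (x : E)
    (k : Fin (finrank F E)) :
    (∑ s, c s * x ^ Fintype.card F ^ (s : ℕ)) ^ Fintype.card F ^ ((k : ℕ) + 1) =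
      ∑ l, c (l - k) ^ Fintype.card F ^ ((k : ℕ) + 1) * x ^ Fintype.card F ^ ((l : ℕ) + 1) := by
  have : NeZero (finrank F E) := ⟨finrank_pos.ne'⟩
  rw [← frobeniusAlgHom_pow_apply, map_sum]
  refine Fintype.sum_equiv (Equiv.addLeft k) _ _ fun s => ?_
  have hsucc (a : ℕ) :
      x ^ Fintype.card F ^ (a + 1) = (x ^ Fintype.card F) ^ Fintype.card F ^ a := by
    rw [pow_succ', pow_mul]
  rw [map_mul, frobeniusAlgHom_pow_apply, frobeniusAlgHom_pow_apply, Equiv.coe_addLeft,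
    add_sub_cancel_left, Fin.val_add, ← pow_mul x, ← pow_add, ← add_assoc, hsucc, hsucc,
    pow_card_pow_mod_finrank, add_comm (s : ℕ)]

end FiniteField

open FiniteField

theorem dickson_matrix_factorisation_general
    (F E : Type) [Field F] [Fintype F] [Field E] [Fintype E] [Algebra F E]
    (q : ℕ) (hq : q = Fintype.card F)
    (m : ℕ) (hdim : Module.finrank F E = m)
    (c : Fin m → E) (ξ : Module.Basis (Fin m) F E)
    (M : Matrix (Fin m) (Fin m) F)
    (hM : ∀ i j, M i j = Algebra.trace F E (ξ i * ∑ k : Fin m, c k * ξ j ^ q ^ (k : ℕ)))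
    (P : Matrix (Fin m) (Fin m) E)
    (hP : ∀ i j, P i j = ξ i ^ q ^ ((j : ℕ) + 1))
    (D : Matrix (Fin m) (Fin m) E)
    (hD : ∀ i j, D i j = c (j - i) ^ q ^ ((i : ℕ) + 1)) :
    M.map (algebraMap F E) = P * D * P.transpose := by
  subst hq hdim
  ext i j
  rw [Matrix.map_apply, hM, algebraMap_trace_eq_sum_pow_succ]
  simp only [mul_pow, sum_mul_pow_card_pow_pow_succ]
  simp only [Matrix.mul_apply, Matrix.transpose_apply, hP, hD, Finset.mul_sum, Finset.sum_mul,
    mul_assoc]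
  exact Finset.sum_comm

/-- **Lemma (Dickson matrix factorisation).**
Let `L = ∑_k c_k X^{q^k}` be a linearised polynomial over `E = F_{q^m}`, let `ξ` be an
`F_q`-basis of `E`, let `M` over `F_q` be given by `M i j = Tr_m (ξ i · L (ξ j))`, let
`P i j = ξ i ^ (q ^ (j+1))` and let `D_L` be the Dickson matrix of `L`, with entries
`(D_L) i j = c_{(j - i) mod m} ^ (q ^ (i+1))` (indices `0, …, m-1`; by convention the
`q^m`-power map is the identity on `E`, matching the classical `1`-based convention).
Then, regarding `M` as a matrix over `E`, one has `M = P · D_L · Pᵀ`. -/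
theorem dickson_matrix_factorisation
    (F E : Type) [Field F] [Fintype F] [Field E] [Fintype E] [Algebra F E]
    (q : ℕ) (hq : q = Fintype.card F)
    (m : ℕ) (hm : 1 ≤ m) (hdim : Module.finrank F E = m)
    (c : Fin m → E) (ξ : Module.Basis (Fin m) F E)
    (M : Matrix (Fin m) (Fin m) F)
    (hM : ∀ i j, M i j = Algebra.trace F E (ξ i * ∑ k : Fin m, c k * ξ j ^ q ^ (k : ℕ)))
    (P : Matrix (Fin m) (Fin m) E)
    (hP : ∀ i j, P i j = ξ i ^ q ^ ((j : ℕ) + 1))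
    (D : Matrix (Fin m) (Fin m) E)
    (hD : ∀ i j, D i j = c (j - i) ^ q ^ ((i : ℕ) + 1)) :
    M.map (algebraMap F E) = P * D * P.transpose :=
  dickson_matrix_factorisation_general F E q hq m hdim c ξ M hM P hP D hD
end
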